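/- arXiv:2510.13038 — 5 statements merged into one kernel-verified Lean document; each statement's English description precedes it below -/
import Mathlib

section
/- Let Γ be a finite simplicial graph, A_Γ the associated right-angled Artin group, v, w ∈ Γ non-adjacent vertices, A a union of connected components of Γ ∖ st(v) and B a union of connected components of Γ ∖ st(w). Then the partial conjugations c_A^v and c_B^w commute in Aut(A_Γ) if and only if one of the following holds: (i) A ∩ B = ∅, v ∉ B, and w ∉ A; (ii) A ⊆ B and v ∈ B; (iii) B ⊆ A and w ∈ A. -/
/-!
STATEMENT 7: For a RAAG `A_Γ`, non-adjacent vertices `v, w`, and unions `A`, `B` of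
connected components of `Γ ∖ st(v)`, `Γ ∖ st(w)` respectively, the partial conjugations
`c_A^v` and `c_B^w` commute iff (i) `A ∩ B = ∅`, `v ∉ B`, `w ∉ A`; or (ii) `A ⊆ B`, `v ∈ B`;
or (iii) `B ⊆ A`, `w ∈ A`.
-/

/-- The defining relators of the right-angled Artin group of a graph. -/
def raagRels {V : Type*} (Γ : SimpleGraph V) : Set (FreeGroup V) :=
  {r | ∃ u v : V, Γ.Adj u v ∧
    r = FreeGroup.of u * FreeGroup.of v * (FreeGroup.of u)⁻¹ * (FreeGroup.of v)⁻¹}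

/-- The right-angled Artin group on a graph `Γ`. -/
abbrev RAAG {V : Type*} (Γ : SimpleGraph V) : Type _ := PresentedGroup (raagRels Γ)

/-- The standard generator of `RAAG Γ` corresponding to a vertex. -/
def raagGen {V : Type*} (Γ : SimpleGraph V) (v : V) : RAAG Γ := PresentedGroup.of v

/-- The star of a vertex: the vertex together with its neighbours. -/
def graphStar {V : Type*} (Γ : SimpleGraph V) (v : V) : Set V :=
  insert v (Γ.neighborSet v)

/-- The connected component (as a set of vertices of `V`) of the vertex `u` in the induced
subgraph of `Γ` on the set `s`. -/
def compIn {V : Type*} (Γ : SimpleGraph V) (s : Set V) (u : V) : Set V :=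
  {x | ∃ (hu : u ∈ s) (hx : x ∈ s), (Γ.induce s).Reachable ⟨u, hu⟩ ⟨x, hx⟩}

/-- `A` is a union of connected components of `Γ ∖ st(v)`. -/
def IsUnionOfComponents {V : Type*} (Γ : SimpleGraph V) (v : V) (A : Set V) : Prop :=
  A ⊆ (graphStar Γ v)ᶜ ∧ ∀ u ∈ A, compIn Γ (graphStar Γ v)ᶜ u ⊆ A

open Classical in
/-- `φ` is the partial conjugation by the vertex `v` based at the set `A`: it sends each
standard generator `u ∈ A` to `v⁻¹ u v` and fixes all other standard generators. -/
noncomputable def IsPartialConj {V : Type*} (Γ : SimpleGraph V)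
    (φ : MulAut (RAAG Γ)) (v : V) (A : Set V) : Prop :=
  ∀ u : V, φ (raagGen Γ u) =
    if u ∈ A then (raagGen Γ v)⁻¹ * raagGen Γ u * raagGen Γ v else raagGen Γ u

/-!
Both automorphisms are determined by their values on the standard generators, so commutation
can be checked generator by generator, and in each of the three cases this is a direct
computation in the group. Conversely, if the conditions fail, some generator `u` is moved
differently by `φ ∘ ψ` and `ψ ∘ φ`. To see this, map `A_Γ` onto the free group of rank two,
sending `v` (and possibly `u`) to one free generator, `w` (and possibly `u`) to the other and
every other vertex to `1`; this is a homomorphism because the vertices with different images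
are non-adjacent, and the two words obtained are visibly different.
-/

section RAAG

variable {V : Type*} (Γ : SimpleGraph V)

def raagLift {G : Type*} [Group G] (f : V → G)
    (hf : ∀ a b, Γ.Adj a b → Commute (f a) (f b)) : RAAG Γ →* G :=
  PresentedGroup.toGroup (f := f) <| by
    rintro _ ⟨a, b, hab, rfl⟩
    simp [(hf a b hab).eq]

@[simp]
lemma raagLift_raagGen {G : Type*} [Group G] (f : V → G)
    (hf : ∀ a b, Γ.Adj a b → Commute (f a) (f b)) (u : V) :
    raagLift Γ f hf (raagGen Γ u) = f u :=
  PresentedGroup.toGroup.of _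

open Classical in
noncomputable def raagTwoColorHom (P Q : Set V) (hPQ : ∀ p ∈ P, ∀ q ∈ Q, ¬ Γ.Adj p q) :
    RAAG Γ →* FreeGroup Bool :=
  raagLift Γ (fun t => if t ∈ P then .of true else if t ∈ Q then .of false else 1) <| by
    intro a b hab
    split_ifs <;> first
      | exact Commute.refl _ | exact Commute.one_left _ | exact Commute.one_right _
      | exact absurd hab (hPQ _ ‹_› _ ‹_›) | exact absurd hab.symm (hPQ _ ‹_› _ ‹_›)

open Classical in
@[simp]
lemma raagTwoColorHom_raagGen (P Q : Set V) (hPQ : ∀ p ∈ P, ∀ q ∈ Q, ¬ Γ.Adj p q) (t : V) :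
    raagTwoColorHom Γ P Q hPQ (raagGen Γ t) =
      if t ∈ P then .of true else if t ∈ Q then .of false else 1 :=
  raagLift_raagGen ..

variable {Γ}

lemma commute_iff_forall_raagGen {φ ψ : MulAut (RAAG Γ)} :
    Commute φ ψ ↔ ∀ u, φ (ψ (raagGen Γ u)) = ψ (φ (raagGen Γ u)) :=
  ⟨fun h u => DFunLike.congr_fun h.eq (raagGen Γ u),
    fun h => MulEquiv.toMonoidHom_injective (PresentedGroup.ext h)⟩

end RAAG

section PartialConj

variable {V : Type*} {Γ : SimpleGraph V} {φ ψ : MulAut (RAAG Γ)} {v w : V} {A B : Set V}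

lemma IsPartialConj.apply_of_mem (hφ : IsPartialConj Γ φ v A) {u : V} (hu : u ∈ A) :
    φ (raagGen Γ u) = (raagGen Γ v)⁻¹ * raagGen Γ u * raagGen Γ v := by
  simpa [hu] using hφ u

lemma IsPartialConj.apply_of_notMem (hφ : IsPartialConj Γ φ v A) {u : V} (hu : u ∉ A) :
    φ (raagGen Γ u) = raagGen Γ u := by
  simpa [hu] using hφ u

lemma notMem_of_subset_compl_graphStar (hA : A ⊆ (graphStar Γ v)ᶜ) : v ∉ A :=
  fun hv => hA hv (Set.mem_insert v _)

lemma not_adj_of_subset_compl_graphStar (hA : A ⊆ (graphStar Γ v)ᶜ) {u : V} (hu : u ∈ A) :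
    ¬ Γ.Adj v u :=
  fun hvu => hA hu (Set.mem_insert_of_mem v hvu)

lemma commute_of_disjoint (hφ : IsPartialConj Γ φ v A) (hψ : IsPartialConj Γ ψ w B)
    (hAB : A ∩ B = ∅) (hvB : v ∉ B) (hwA : w ∉ A) : Commute φ ψ := by
  refine commute_iff_forall_raagGen.2 fun u => ?_
  by_cases huA : u ∈ A
  · have huB : u ∉ B := fun huB => hAB.subset ⟨huA, huB⟩
    simp [hφ.apply_of_mem huA, hψ.apply_of_notMem huB, hψ.apply_of_notMem hvB]
  by_cases huB : u ∈ B
  · simp [hψ.apply_of_mem huB, hφ.apply_of_notMem huA, hφ.apply_of_notMem hwA]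
  · simp [hφ.apply_of_notMem huA, hψ.apply_of_notMem huB]

lemma commute_of_subset (hφ : IsPartialConj Γ φ v A) (hψ : IsPartialConj Γ ψ w B)
    (hwB : w ∉ B) (hAB : A ⊆ B) (hvB : v ∈ B) : Commute φ ψ := by
  have hwA : w ∉ A := fun hwA => hwB (hAB hwA)
  refine commute_iff_forall_raagGen.2 fun u => ?_
  by_cases huA : u ∈ A
  · simp [hφ.apply_of_mem huA, hψ.apply_of_mem (hAB huA), hψ.apply_of_mem hvB,
      hφ.apply_of_notMem hwA, mul_assoc]
  by_cases huB : u ∈ B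
  · simp [hψ.apply_of_mem huB, hφ.apply_of_notMem huA, hφ.apply_of_notMem hwA]
  · simp [hφ.apply_of_notMem huA, hψ.apply_of_notMem huB]

lemma subset_of_commute (hA : A ⊆ (graphStar Γ v)ᶜ) (hvw : v ≠ w) (hadj : ¬ Γ.Adj v w)
    (hφ : IsPartialConj Γ φ v A) (hψ : IsPartialConj Γ ψ w B) (h : Commute φ ψ) (hvB : v ∈ B) :
    A ⊆ B := by
  intro u huA
  by_contra huB
  have huv : u ≠ v := fun huv => notMem_of_subset_compl_graphStar hA (huv ▸ huA)
  let π := raagTwoColorHom Γ {v} {w, u} (by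
    simpa using ⟨hadj, not_adj_of_subset_compl_graphStar hA huA⟩)
  have key := congrArg π (commute_iff_forall_raagGen.1 h u)
  simp only [π, raagTwoColorHom_raagGen, hφ.apply_of_mem huA, hψ.apply_of_notMem huB,
    hψ.apply_of_mem hvB, map_mul, map_inv, Set.mem_singleton_iff, Set.mem_insert_iff, huv,
    hvw.symm, or_true, true_or, if_true, if_false] at key
  exact absurd key (by decide)

lemma inter_eq_empty_of_commute (hB : B ⊆ (graphStar Γ w)ᶜ) (hvw : v ≠ w) (hadj : ¬ Γ.Adj v w)
    (hφ : IsPartialConj Γ φ v A) (hψ : IsPartialConj Γ ψ w B) (h : Commute φ ψ) (hvB : v ∉ B)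
    (hwA : w ∉ A) : A ∩ B = ∅ := by
  refine Set.eq_empty_of_forall_notMem fun u ⟨huA, huB⟩ => ?_
  have huw : u ≠ w := fun huw => hwA (huw ▸ huA)
  let π := raagTwoColorHom Γ {v, u} {w} (by
    simpa using ⟨hadj, fun hwu => not_adj_of_subset_compl_graphStar hB huB hwu.symm⟩)
  have key := congrArg π (commute_iff_forall_raagGen.1 h u)
  simp only [π, raagTwoColorHom_raagGen, hφ.apply_of_mem huA, hψ.apply_of_mem huB,
    hφ.apply_of_notMem hwA, hψ.apply_of_notMem hvB, map_mul, map_inv, Set.mem_singleton_iff,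
    Set.mem_insert_iff, hvw.symm, huw.symm, or_self, or_true, true_or, if_true, if_false] at key
  exact absurd key (by decide)

end PartialConj

theorem partialConj_commute_iff_general {V : Type*} (Γ : SimpleGraph V)
    (v w : V) (hvw : v ≠ w) (hadj : ¬ Γ.Adj v w)
    (A B : Set V) (hA : IsUnionOfComponents Γ v A) (hB : IsUnionOfComponents Γ w B)
    (φ ψ : MulAut (RAAG Γ)) (hφ : IsPartialConj Γ φ v A) (hψ : IsPartialConj Γ ψ w B) :
    Commute φ ψ ↔
      (A ∩ B = ∅ ∧ v ∉ B ∧ w ∉ A) ∨ (A ⊆ B ∧ v ∈ B) ∨ (B ⊆ A ∧ w ∈ A) := by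
  constructor
  · intro h
    by_cases hvB : v ∈ B
    · exact .inr (.inl ⟨subset_of_commute hA.1 hvw hadj hφ hψ h hvB, hvB⟩)
    by_cases hwA : w ∈ A
    · exact .inr (.inr ⟨subset_of_commute hB.1 hvw.symm (hadj ·.symm) hψ hφ h.symm hwA, hwA⟩)
    exact .inl ⟨inter_eq_empty_of_commute hB.1 hvw hadj hφ hψ h hvB hwA, hvB, hwA⟩
  · rintro (⟨hAB, hvB, hwA⟩ | ⟨hAB, hvB⟩ | ⟨hBA, hwA⟩)
    · exact commute_of_disjoint hφ hψ hAB hvB hwA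
    · exact commute_of_subset hφ hψ (notMem_of_subset_compl_graphStar hB.1) hAB hvB
    · exact (commute_of_subset hψ hφ (notMem_of_subset_compl_graphStar hA.1) hBA hwA).symm

theorem partialConj_commute_iff {V : Type*} [Fintype V] (Γ : SimpleGraph V)
    (v w : V) (hvw : v ≠ w) (hadj : ¬ Γ.Adj v w)
    (A B : Set V) (hA : IsUnionOfComponents Γ v A) (hB : IsUnionOfComponents Γ w B)
    (φ ψ : MulAut (RAAG Γ)) (hφ : IsPartialConj Γ φ v A) (hψ : IsPartialConj Γ ψ w B) :
    Commute φ ψ ↔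
      (A ∩ B = ∅ ∧ v ∉ B ∧ w ∉ A) ∨ (A ⊆ B ∧ v ∈ B) ∨ (B ⊆ A ∧ w ∈ A) :=
  partialConj_commute_iff_general Γ v w hvw hadj A B hA hB φ ψ hφ hψ
end

section
/- Let v_1, …, v_n be pairwise non-adjacent vertices of a finite graph Γ lying in distinct connected components L_1, …, L_n of Γ ∖ ⋂_{j=1}^n lk(v_j). Then for each i ≠ j, the set L_i is a connected component of Γ ∖ st(v_j). -/
lemma compIn_mono {V : Type*} (Γ : SimpleGraph V) {s t : Set V} (hst : s ⊆ t) (u : V) :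
    compIn Γ s u ⊆ compIn Γ t u := by
  rintro x ⟨hu, hx, hr⟩
  refine ⟨hst hu, hst hx, ?_⟩
  exact hr.map ⟨Set.inclusion hst, fun {a b} h => h⟩

lemma support_mem_comp {V : Type*} (Γ : SimpleGraph V) {t : Set V} :
    ∀ {a x : t} (w : (Γ.induce t).Walk a x) (y : t), y ∈ w.support →
      (Γ.induce t).Reachable a y := by
  intro a x w
  induction w with
  | nil => intro y hy; simp at hy; subst hy; exact SimpleGraph.Reachable.refl _
  | cons h p ih =>
    intro y hy
    rcases List.mem_cons.1 hy with h1 | h2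
    · subst h1; exact SimpleGraph.Reachable.refl _
    · exact h.reachable.trans (ih y h2)

lemma walk_transfer {V : Type*} (Γ : SimpleGraph V) {s t : Set V} {a x : t}
    (w : (Γ.induce t).Walk a x) (hsup : ∀ y : t, y ∈ w.support → (y : V) ∈ s) :
    ∃ (ha : (a : V) ∈ s) (hx : (x : V) ∈ s),
      (Γ.induce s).Reachable ⟨a, ha⟩ ⟨x, hx⟩ := by
  induction w with
  | nil => exact ⟨hsup _ (by simp), hsup _ (by simp), SimpleGraph.Reachable.refl _⟩
  | @cons a b x h p ih =>
    have ha : (a : V) ∈ s := hsup a (by simp)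
    obtain ⟨hb, hx, hr⟩ := ih (fun y hy => hsup y (by simp [hy]))
    refine ⟨ha, hx, ?_⟩
    have hadj : (Γ.induce s).Adj ⟨a, ha⟩ ⟨b, hb⟩ := by simpa using h
    exact hadj.reachable.trans hr

theorem component_of_star_complement {V : Type*} [Fintype V] (Γ : SimpleGraph V)
    (n : ℕ) (v : Fin n → V)
    (hdist : ∀ i j, i ≠ j → v i ≠ v j)
    (hnadj : ∀ i j, ¬ Γ.Adj (v i) (v j))
    -- the `v i` lie in pairwise distinct connected components of `Γ ∖ ⋂ lk(v_j)`
    (hcomp : ∀ i j, i ≠ j →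
      v j ∉ compIn Γ (⋂ l, Γ.neighborSet (v l))ᶜ (v i)) :
    ∀ i j, i ≠ j →
      compIn Γ (⋂ l, Γ.neighborSet (v l))ᶜ (v i) =
        compIn Γ (graphStar Γ (v j))ᶜ (v i) := by
  intro i j hij
  set s0 : Set V := (⋂ l, Γ.neighborSet (v l))ᶜ with hs0
  set s1 : Set V := (graphStar Γ (v j))ᶜ with hs1
  have hsub : s1 ⊆ s0 := by
    intro x hx
    intro hmem
    exact hx (Or.inr (Set.mem_iInter.1 hmem j))
  -- the component avoids the star
  have hL : compIn Γ s0 (v i) ⊆ s1 := by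
    rintro x ⟨hu, hx, hr⟩ hxstar
    rcases hxstar with rfl | hadj
    · exact hcomp i j hij ⟨hu, hx, hr⟩
    · -- x is adjacent to v j, so v j would be in the component
      have hvj : v j ∈ s0 := by
        intro hmem
        exact Γ.irrefl (Set.mem_iInter.1 hmem j)
      refine hcomp i j hij ⟨hu, hvj, ?_⟩
      have hadj' : (Γ.induce s0).Adj ⟨x, hx⟩ ⟨v j, hvj⟩ := by
        simpa using hadj.symm
      exact hr.trans hadj'.reachable
  ext x
  constructor
  · rintro ⟨hu, hx, hr⟩
    obtain ⟨w⟩ := hr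
    have hsup : ∀ y : s0, y ∈ w.support → (y : V) ∈ s1 := by
      intro y hy
      exact hL ⟨hu, y.2, support_mem_comp Γ w y hy⟩
    obtain ⟨ha, hxx, hr'⟩ := walk_transfer Γ w hsup
    exact ⟨ha, hxx, hr'⟩
  · exact fun h => compIn_mono Γ hsub (v i) h
end

section
/- Suppose a finite graph Γ satisfies condition (*) (there do not exist four pairwise non-adjacent vertices v_1, v_2, v_3, v_4 lying in four distinct connected components of Γ ∖ ⋂_{i=1}^4 lk(v_i)), and let Δ ⊆ Γ be a full subgraph such that A_Δ is preserved by POut(A_Γ). Then Δ has at most 3 connected components with respect to 𝒞̄_Δ-connectivity, where 𝒞̄ is the family of all proper special subgroups of A_Γ preserved by POut(A_Γ) and 𝒞̄_Δ = {A_{Δ∩Θ} : A_Θ ∈ 𝒞̄, Δ ⊄ Θ}. -/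
/-- The special subgroup of the RAAG generated by the vertices of `Δ`. -/
def specialSubgroup {V : Type*} (Γ : SimpleGraph V) (Δ : Set V) : Subgroup (RAAG Γ) :=
  Subgroup.closure (raagGen Γ '' Δ)

/-- `φ` preserves the subgroup `S` up to conjugacy: some representative of the outer
class of `φ` maps `S` onto `S`. -/
def PreservesSubgroup {V : Type*} (Γ : SimpleGraph V) (φ : MulAut (RAAG Γ))
    (S : Subgroup (RAAG Γ)) : Prop :=
  ∃ x : RAAG Γ, S.map ((MulAut.conj x * φ : MulAut (RAAG Γ)) : RAAG Γ →* RAAG Γ) = S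

/-- `φ` acts trivially on the subgroup `S`: some representative of the outer class of `φ`
restricts to the identity on `S`. -/
def ActsTriviallyOn {V : Type*} (Γ : SimpleGraph V) (φ : MulAut (RAAG Γ))
    (S : Subgroup (RAAG Γ)) : Prop :=
  ∃ x : RAAG Γ, ∀ a ∈ S, x * φ a * x⁻¹ = a

/-- The subgroup of pure symmetric automorphisms: the subgroup of `Aut(A_Γ)` generated by
all partial conjugations `c_L^v` with `L` a connected component of `Γ ∖ st(v)` (by a
theorem of Laurence these generate the group of all automorphisms sending each standard
generator to a conjugate of itself). -/
def PAutRaag {V : Type*} (Γ : SimpleGraph V) : Subgroup (MulAut (RAAG Γ)) :=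
  Subgroup.closure {φ | ∃ (v : V) (u : V), u ∈ (graphStar Γ v)ᶜ ∧
    IsPartialConj Γ φ v (compIn Γ (graphStar Γ v)ᶜ u)}

/-- Condition (*) of the paper: `Γ` does not contain four pairwise non-adjacent vertices
lying in four distinct connected components of `Γ ∖ ⋂_{i} lk(v_i)`. -/
def StarCondition {V : Type*} (Γ : SimpleGraph V) : Prop :=
  ¬ ∃ v : Fin 4 → V, (∀ i j, i ≠ j → v i ≠ v j) ∧ (∀ i j, ¬ Γ.Adj (v i) (v j)) ∧
      (∀ i j, i ≠ j → v j ∉ compIn Γ (⋂ l, Γ.neighborSet (v l))ᶜ (v i))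

/-- The family `𝒞̄`: vertex sets of proper special subgroups preserved (up to conjugacy)
by every pure symmetric (outer) automorphism. -/
def barC {V : Type*} (Γ : SimpleGraph V) : Set (Set V) :=
  {Θ | Θ ≠ Set.univ ∧ ∀ φ ∈ PAutRaag Γ, PreservesSubgroup Γ φ (specialSubgroup Γ Θ)}

/-- The family `𝒞̄_Δ = {Δ ∩ Θ : Θ ∈ 𝒞̄, Δ ⊄ Θ}`. -/
def barCDelta {V : Type*} (Γ : SimpleGraph V) (Δ : Set V) : Set (Set V) :=
  {S | ∃ Θ ∈ barC Γ, ¬ Δ ⊆ Θ ∧ S = Δ ∩ Θ}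

/-- `𝒢`-adjacency of vertices of `Δ`: adjacent in `Γ`, or both contained in a common
member of the family `𝒢`. -/
def famAdj {V : Type*} (Γ : SimpleGraph V) (Δ : Set V) (𝒢 : Set (Set V)) (u w : V) : Prop :=
  u ∈ Δ ∧ w ∈ Δ ∧ (Γ.Adj u w ∨ ∃ S ∈ 𝒢, u ∈ S ∧ w ∈ S)

/-! ### Auxiliary infrastructure -/

section Aux

variable {V : Type*} (Γ : SimpleGraph V)

/-- Paths of a given length inside a vertex set `s`. -/
inductive PathN (s : Set V) : ℕ → V → V → Prop
  | refl (a : V) (ha : a ∈ s) : PathN s 0 a a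
  | cons {n : ℕ} {a b c : V} (ha : a ∈ s) (hb : b ∈ s) (hadj : Γ.Adj a b)
      (h : PathN s n b c) : PathN s (n + 1) a c

variable {Γ}

lemma PathN.mem_left {s : Set V} {n a b} (h : PathN Γ s n a b) : a ∈ s := by
  cases h with
  | refl _ ha => exact ha
  | cons ha _ _ _ => exact ha

lemma PathN.mem_right {s : Set V} {n a b} (h : PathN Γ s n a b) : b ∈ s := by
  induction h with
  | refl _ ha => exact ha
  | cons _ _ _ _ ih => exact ih

lemma PathN.eq_of_zero {s : Set V} {a b} (h : PathN Γ s 0 a b) : a = b := by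
  cases h; rfl

lemma PathN.trans {s : Set V} {m n a b c} (h₁ : PathN Γ s m a b) (h₂ : PathN Γ s n b c) :
    PathN Γ s (m + n) a c := by
  induction h₁ with
  | refl _ _ => rwa [Nat.zero_add]
  | cons ha hb hadj _ ih =>
      rw [Nat.succ_add]
      exact PathN.cons ha hb hadj (ih h₂)

lemma PathN.snoc {s : Set V} {n a b c} (h : PathN Γ s n a b) (hc : c ∈ s)
    (hadj : Γ.Adj b c) : PathN Γ s (n + 1) a c :=
  h.trans (PathN.cons h.mem_right hc hadj (PathN.refl c hc))

lemma PathN.symm {s : Set V} {n a b} (h : PathN Γ s n a b) : PathN Γ s n b a := by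
  induction h with
  | refl a ha => exact PathN.refl a ha
  | cons ha _ hadj _ ih => exact ih.snoc ha hadj.symm

lemma PathN.mono {s t : Set V} (hst : s ⊆ t) {n a b} (h : PathN Γ s n a b) :
    PathN Γ t n a b := by
  induction h with
  | refl a ha => exact PathN.refl a (hst ha)
  | cons ha hb hadj _ ih => exact PathN.cons (hst ha) (hst hb) hadj ih

lemma mem_compIn_iff {s : Set V} {u x : V} :
    x ∈ compIn Γ s u ↔ ∃ n, PathN Γ s n u x := by
  constructor
  · rintro ⟨hu, hx, ⟨p⟩⟩
    have key : ∀ (A B : s) (_ : (Γ.induce s).Walk A B), ∃ n, PathN Γ s n A.1 B.1 := by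
      intro A B q
      induction q with
      | nil => exact ⟨0, PathN.refl _ (Subtype.prop _)⟩
      | @cons X Y Z hadj q ih =>
          obtain ⟨n, hn⟩ := ih
          exact ⟨n + 1, PathN.cons X.2 Y.2 (by simpa using hadj) hn⟩
    exact key ⟨u, hu⟩ ⟨x, hx⟩ p
  · rintro ⟨n, h⟩
    have key : ∀ {n a b}, PathN Γ s n a b → ∀ (ha : a ∈ s) (hb : b ∈ s),
        (Γ.induce s).Reachable ⟨a, ha⟩ ⟨b, hb⟩ := by
      intro n a b h
      induction h with
      | refl a ha => intro _ _; exact SimpleGraph.Reachable.refl _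
      | @cons n a b c ha' hb' hadj h ih =>
          intro ha hc
          exact (SimpleGraph.Adj.reachable (by simpa using hadj :
            (Γ.induce s).Adj ⟨a, ha⟩ ⟨b, hb'⟩)).trans (ih hb' hc)
    exact ⟨h.mem_left, h.mem_right, key h h.mem_left h.mem_right⟩

/-- Restrict a path to the reachable-set of its base point. -/
lemma PathN.restrict {s : Set V} {u : V} {n : ℕ} {x y : V}
    (h : PathN Γ s n x y) :
    (∃ m, PathN Γ s m u x) → PathN Γ {z | ∃ m, PathN Γ s m u z} n x y := by
  induction h with
  | refl a _ => intro hx; exact PathN.refl a hx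
  | @cons k a b c ha hb hadj hp ih =>
      intro hx
      obtain ⟨m, hm⟩ := hx
      exact PathN.cons ⟨m, hm⟩ ⟨m + 1, hm.snoc hb hadj⟩ hadj (ih ⟨m + 1, hm.snoc hb hadj⟩)

end Aux
section Comb

variable {V : Type*} {Γ : SimpleGraph V}

lemma mem_graphStar_self {v : V} : v ∈ graphStar Γ v := Set.mem_insert _ _

lemma adj_mem_graphStar {v x : V} (h : Γ.Adj v x) : x ∈ graphStar Γ v :=
  Set.mem_insert_of_mem _ h

lemma not_mem_graphStar_iff {v x : V} : x ∉ graphStar Γ v ↔ x ≠ v ∧ ¬ Γ.Adj v x := by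
  simp [graphStar, not_or]

/-- Certified sets: for every vertex `v` outside, all elements of the set outside `st(v)`
lie in a single component of `Γ ∖ st(v)`. -/
def Certified {V : Type*} (Γ : SimpleGraph V) (Θ : Set V) : Prop :=
  ∀ v ∉ Θ, ∀ x ∈ Θ, ∀ y ∈ Θ, x ∉ graphStar Γ v → y ∉ graphStar Γ v →
    y ∈ compIn Γ (graphStar Γ v)ᶜ x

/-- The key path-surgery lemma: a path in `s` either avoids `st(v)` or can be cut at `st(v)`
into controlled-length pieces through `v`. -/
lemma pathN_transfer {s : Set V} {v : V} (hv : v ∈ s) {n : ℕ} {x z : V}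
    (h : PathN Γ s n x z) (hz : z ∉ graphStar Γ v) :
    PathN Γ (s ∩ (graphStar Γ v)ᶜ) n x z ∨
    ∃ m₁ m₂, PathN Γ s m₁ x v ∧ PathN Γ s m₂ v z ∧ m₁ + m₂ ≤ n + 2 ∧ m₁ ≤ n := by
  induction h with
  | refl a ha => exact Or.inl (PathN.refl a ⟨ha, hz⟩)
  | @cons k a b c ha hb hadj hp ih =>
      by_cases hx : a ∈ graphStar Γ v
      · rcases hx with heq | hadj'
        · -- a = v
          subst heq
          exact Or.inr ⟨0, k + 1, PathN.refl a ha, PathN.cons ha hb hadj hp,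
            by omega, by omega⟩
        · -- Adj a v  (hadj' : a ∈ neighborSet v, i.e. Γ.Adj v a)
          refine Or.inr ⟨1, k + 2, ?_, ?_, by omega, by omega⟩
          · exact PathN.cons ha hv (SimpleGraph.Adj.symm hadj') (PathN.refl v hv)
          · exact PathN.cons hv ha hadj' (PathN.cons ha hb hadj hp)
      · rcases ih hz with hclean | ⟨m₁, m₂, h₁, h₂, hsum, hle⟩
        · exact Or.inl (PathN.cons ⟨ha, hx⟩ hclean.mem_left hadj hclean)
        · refine Or.inr ⟨m₁ + 1, m₂, PathN.cons ha hb hadj h₁, h₂, by omega, ?_⟩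
          -- need m₁ + 1 ≤ k + 1, i.e. m₁ ≤ k; we have m₁ ≤ k from hle
          omega

/-- Stars are certified. -/
lemma certified_graphStar (v₀ : V) : Certified Γ (graphStar Γ v₀) := by
  intro v hv x hx y hy hxs hys
  have hv₀ : v₀ ∉ graphStar Γ v := by
    rcases not_mem_graphStar_iff.1 hv with ⟨hne, hnadj⟩
    exact not_mem_graphStar_iff.2 ⟨fun h => hne h.symm, fun h => hnadj h.symm⟩
  have path_to : ∀ w ∈ graphStar Γ v₀, w ∉ graphStar Γ v →
      ∃ n, PathN Γ (graphStar Γ v)ᶜ n v₀ w := by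
    intro w hw hws
    rcases hw with heq | hadj
    · subst heq; exact ⟨0, PathN.refl _ hv₀⟩
    · exact ⟨1, PathN.cons hv₀ hws (by exact hadj) (PathN.refl _ hws)⟩
  obtain ⟨n₁, h₁⟩ := path_to x hx hxs
  obtain ⟨n₂, h₂⟩ := path_to y hy hys
  exact mem_compIn_iff.2 ⟨n₁ + n₂, h₁.symm.trans h₂⟩

/-- `K ∪ C` is certified when `C` is the component of a hub `u` adjacent to all of `K`. -/
lemma certified_union_comp (K : Set V) (u : V) (hu : u ∈ Kᶜ)
    (hK : ∀ k ∈ K, Γ.Adj k u) : Certified Γ (K ∪ compIn Γ Kᶜ u) := by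
  intro v hv x hx y hy hxs hys
  have hvK : v ∉ K := fun h => hv (Or.inl h)
  have hvC : v ∉ compIn Γ Kᶜ u := fun h => hv (Or.inr h)
  -- the star of v misses C entirely
  have star_disj : ∀ z ∈ compIn Γ Kᶜ u, z ∉ graphStar Γ v := by
    intro z hz hzs
    rcases hzs with heq | hadj
    · exact hvC (heq ▸ hz)
    · obtain ⟨m, hm⟩ := mem_compIn_iff.1 hz
      exact hvC (mem_compIn_iff.2 ⟨m + 1, hm.snoc hvK (SimpleGraph.Adj.symm hadj)⟩)
  have hu_star : u ∉ graphStar Γ v := star_disj u (mem_compIn_iff.2 ⟨0, PathN.refl u hu⟩)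
  -- every element of Θ outside star v connects to u avoiding star v
  have conn : ∀ w, w ∈ K ∪ compIn Γ Kᶜ u → w ∉ graphStar Γ v →
      ∃ n, PathN Γ (graphStar Γ v)ᶜ n u w := by
    intro w hw hws
    rcases hw with hwK | hwC
    · exact ⟨1, PathN.cons hu_star hws (hK w hwK).symm (PathN.refl _ hws)⟩
    · obtain ⟨m, hm⟩ := mem_compIn_iff.1 hwC
      have : PathN Γ {z | ∃ m, PathN Γ Kᶜ m u z} m u w :=
        hm.restrict ⟨0, PathN.refl u hu⟩
      refine ⟨m, this.mono ?_⟩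
      intro z hz
      exact star_disj z (mem_compIn_iff.2 hz)
  obtain ⟨n₁, h₁⟩ := conn x hx hxs
  obtain ⟨n₂, h₂⟩ := conn y hy hys
  exact mem_compIn_iff.2 ⟨n₁ + n₂, h₁.symm.trans h₂⟩

end Comb
section Ellipse

variable {V : Type*} {Γ : SimpleGraph V}

/-- The "ellipse" of vertices on short detours between `a` and `b` inside `Kᶜ`. -/
def ell (Γ : SimpleGraph V) (K : Set V) (a b : V) (d : ℕ) : Set V :=
  {z | ∃ p q, PathN Γ Kᶜ p a z ∧ PathN Γ Kᶜ q z b ∧ p + q + 1 ≤ 2 * d}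

lemma certified_ell (K : Set V) (a b : V) (d : ℕ) (hd : 3 ≤ d)
    (hK : ∀ k ∈ K, Γ.Adj k a) (hab : PathN Γ Kᶜ d a b) :
    Certified Γ (K ∪ ell Γ K a b d) := by
  intro v hv x hx y hy hxs hys
  have hvK : v ∉ K := fun h => hv (Or.inl h)
  have hvE : v ∉ ell Γ K a b d := fun h => hv (Or.inr h)
  have hvs : v ∈ Kᶜ := hvK
  have ha_mem : a ∈ ell Γ K a b d :=
    ⟨0, d, PathN.refl a hab.mem_left, hab, by omega⟩
  have hb_mem : b ∈ ell Γ K a b d :=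
    ⟨d, 0, hab, PathN.refl b hab.mem_right, by omega⟩
  -- a is not in star v
  have hva : a ∉ graphStar Γ v := by
    intro h
    rcases h with heq | hadj
    · exact hvE (heq ▸ ha_mem)
    · exact hvE ⟨1, d + 1,
        PathN.cons hab.mem_left hvs (SimpleGraph.Adj.symm hadj) (PathN.refl v hvs),
        PathN.cons hvs hab.mem_left hadj hab, by omega⟩
  have hvb : b ∉ graphStar Γ v := by
    intro h
    rcases h with heq | hadj
    · exact hvE (heq ▸ hb_mem)
    · exact hvE ⟨d + 1, 1,
        hab.snoc hvs (SimpleGraph.Adj.symm hadj),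
        PathN.cons hvs hab.mem_right hadj (PathN.refl b hab.mem_right), by omega⟩
  -- the geodesic from a to b avoids star v
  have hab_clean : PathN Γ (Kᶜ ∩ (graphStar Γ v)ᶜ) d a b := by
    rcases pathN_transfer hvs hab hvb with hclean | ⟨m₁, m₂, h₁, h₂, hsum, _⟩
    · exact hclean
    · exact absurd ⟨m₁, m₂, h₁, h₂, by omega⟩ hvE
  -- every element of the ellipse outside star v connects to a avoiding star v
  have conn : ∀ z ∈ ell Γ K a b d, z ∉ graphStar Γ v →
      ∃ n, PathN Γ (graphStar Γ v)ᶜ n a z := by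
    intro z hz hzs
    obtain ⟨p, q, hp, hq, hpq⟩ := hz
    rcases pathN_transfer hvs hp hzs with hclean | ⟨m₁, m₂, h₁, h₂, hsum₁, hle₁⟩
    · exact ⟨p, hclean.mono fun t ht => ht.2⟩
    · rcases pathN_transfer hvs hq.symm hzs with hclean' | ⟨k₁, k₂, h₁', h₂', hsum₂, hle₂⟩
      · -- clean path b → z; combine with clean a → b
        exact ⟨d + q, (hab_clean.trans hclean').mono fun t ht => ht.2⟩
      · -- both blocked: v is in the ellipse, contradiction
        exact absurd ⟨m₁, k₁, h₁, h₁'.symm, by omega⟩ hvE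
  -- now connect arbitrary elements of Θ = K ∪ ell to a
  have conn_all : ∀ w, w ∈ K ∪ ell Γ K a b d → w ∉ graphStar Γ v →
      ∃ n, PathN Γ (graphStar Γ v)ᶜ n a w := by
    intro w hw hws
    rcases hw with hwK | hwE
    · exact ⟨1, PathN.cons hva hws (hK w hwK).symm (PathN.refl _ hws)⟩
    · exact conn w hwE hws
  obtain ⟨n₁, h₁⟩ := conn_all x hx hxs
  obtain ⟨n₂, h₂⟩ := conn_all y hy hys
  exact mem_compIn_iff.2 ⟨n₁ + n₂, h₁.symm.trans h₂⟩

end Ellipse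
section GroupPart

variable {V : Type*} {Γ : SimpleGraph V}

lemma raagGen_commute {u v : V} (h : Γ.Adj u v) :
    raagGen Γ u * raagGen Γ v = raagGen Γ v * raagGen Γ u := by
  have hrel : (FreeGroup.of u * FreeGroup.of v * (FreeGroup.of u)⁻¹ * (FreeGroup.of v)⁻¹)
      ∈ raagRels Γ := ⟨u, v, h, rfl⟩
  have h1 : PresentedGroup.mk (raagRels Γ)
      (FreeGroup.of u * FreeGroup.of v * (FreeGroup.of u)⁻¹ * (FreeGroup.of v)⁻¹) = 1 := by
    have : (FreeGroup.of u * FreeGroup.of v * (FreeGroup.of u)⁻¹ * (FreeGroup.of v)⁻¹)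
        ∈ Subgroup.normalClosure (raagRels Γ) := Subgroup.subset_normalClosure hrel
    exact (QuotientGroup.eq_one_iff _).2 this
  have h2 : raagGen Γ u * raagGen Γ v * (raagGen Γ u)⁻¹ * (raagGen Γ v)⁻¹ = 1 := by
    simpa [raagGen, PresentedGroup.of, map_mul, map_inv] using h1
  have := mul_eq_one_iff_eq_inv.1 h2
  group at this ⊢
  calc raagGen Γ u * raagGen Γ v
      = (raagGen Γ u * raagGen Γ v * (raagGen Γ u)⁻¹ * (raagGen Γ v)⁻¹) *
        (raagGen Γ v * raagGen Γ u) := by group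
    _ = raagGen Γ v * raagGen Γ u := by rw [h2]; group

/-- The set of automorphisms preserving a subgroup up to conjugacy forms a subgroup. -/
def preservingSubgroup (Γ : SimpleGraph V) (S : Subgroup (RAAG Γ)) :
    Subgroup (MulAut (RAAG Γ)) where
  carrier := {φ | PreservesSubgroup Γ φ S}
  one_mem' := by
    refine ⟨1, ?_⟩
    have : ((MulAut.conj (1 : RAAG Γ) * 1 : MulAut (RAAG Γ)) : RAAG Γ →* RAAG Γ)
        = MonoidHom.id (RAAG Γ) := by
      ext a; simp
    rw [this, Subgroup.map_id]
  mul_mem' := by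
    rintro φ ψ ⟨x, hx⟩ ⟨y, hy⟩
    refine ⟨x * φ y, ?_⟩
    have hcomp : ((MulAut.conj (x * φ y) * (φ * ψ) : MulAut (RAAG Γ)) : RAAG Γ →* RAAG Γ)
        = ((MulAut.conj x * φ : MulAut (RAAG Γ)) : RAAG Γ →* RAAG Γ).comp
          ((MulAut.conj y * ψ : MulAut (RAAG Γ)) : RAAG Γ →* RAAG Γ) := by
      ext a
      simp [MulAut.conj_apply, MulAut.mul_apply, mul_assoc]
    rw [hcomp, ← Subgroup.map_map, hy, hx]
  inv_mem' := by
    rintro φ ⟨x, hx⟩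
    refine ⟨(φ⁻¹ x)⁻¹, ?_⟩
    have hcomp : ((MulAut.conj ((φ⁻¹ x)⁻¹) * φ⁻¹ : MulAut (RAAG Γ)) : RAAG Γ →* RAAG Γ).comp
        ((MulAut.conj x * φ : MulAut (RAAG Γ)) : RAAG Γ →* RAAG Γ)
        = MonoidHom.id (RAAG Γ) := by
      ext a
      simp [MulAut.conj_apply, MulAut.mul_apply, mul_assoc]
    conv_lhs => rw [← hx]
    rw [Subgroup.map_map, hcomp, Subgroup.map_id]

end GroupPart
section GroupPart2

variable {V : Type*} {Γ : SimpleGraph V}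

lemma compIn_subset {s : Set V} {u : V} : compIn Γ s u ⊆ s := by
  rintro x ⟨_, hx, _⟩; exact hx

lemma compIn_trans {s : Set V} {u t x : V} (ht : t ∈ compIn Γ s u)
    (hx : x ∈ compIn Γ s t) : x ∈ compIn Γ s u := by
  obtain ⟨m, hm⟩ := mem_compIn_iff.1 ht
  obtain ⟨n, hn⟩ := mem_compIn_iff.1 hx
  exact mem_compIn_iff.2 ⟨m + n, hm.trans hn⟩

open Classical in
lemma partialConj_preserves {Θ : Set V} (hΘ : Certified Γ Θ) {φ : MulAut (RAAG Γ)}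
    {v u₀ : V} (hu₀ : u₀ ∈ (graphStar Γ v)ᶜ)
    (hφ : IsPartialConj Γ φ v (compIn Γ (graphStar Γ v)ᶜ u₀)) :
    PreservesSubgroup Γ φ (specialSubgroup Γ Θ) := by
  set A : Set V := compIn Γ (graphStar Γ v)ᶜ u₀ with hA
  have hAsub : A ⊆ (graphStar Γ v)ᶜ := compIn_subset
  have hvA : v ∉ A := fun h => hAsub h mem_graphStar_self
  set X : Set (RAAG Γ) := raagGen Γ '' Θ with hX
  by_cases hvΘ : v ∈ Θ
  · -- v ∈ Θ : φ maps the special subgroup onto itself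
    refine ⟨1, ?_⟩
    have h1 : ((MulAut.conj (1 : RAAG Γ) * φ : MulAut (RAAG Γ)) : RAAG Γ →* RAAG Γ)
        = (φ : RAAG Γ →* RAAG Γ) := by ext a; simp
    rw [h1]
    apply le_antisymm
    · rw [specialSubgroup, MonoidHom.map_closure, Subgroup.closure_le]
      rintro _ ⟨_, ⟨u, hu, rfl⟩, rfl⟩
      show (φ : RAAG Γ →* RAAG Γ) (raagGen Γ u) ∈ Subgroup.closure X
      rw [show (φ : RAAG Γ →* RAAG Γ) (raagGen Γ u) = φ (raagGen Γ u) from rfl, hφ u]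
      have hgu : raagGen Γ u ∈ Subgroup.closure X :=
        Subgroup.subset_closure ⟨u, hu, rfl⟩
      have hgv : raagGen Γ v ∈ Subgroup.closure X :=
        Subgroup.subset_closure ⟨v, hvΘ, rfl⟩
      split
      · exact Subgroup.mul_mem _ (Subgroup.mul_mem _ (Subgroup.inv_mem _ hgv) hgu) hgv
      · exact hgu
    · rw [specialSubgroup, Subgroup.closure_le]
      rintro _ ⟨u, hu, rfl⟩
      have hgu : raagGen Γ u ∈ specialSubgroup Γ Θ :=
        Subgroup.subset_closure ⟨u, hu, rfl⟩
      have hgv : raagGen Γ v ∈ specialSubgroup Γ Θ :=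
        Subgroup.subset_closure ⟨v, hvΘ, rfl⟩
      by_cases huA : u ∈ A
      · refine Subgroup.mem_map.2 ⟨raagGen Γ v * raagGen Γ u * (raagGen Γ v)⁻¹,
          Subgroup.mul_mem _ (Subgroup.mul_mem _ hgv hgu) (Subgroup.inv_mem _ hgv), ?_⟩
        show φ _ = _
        rw [map_mul, map_mul, map_inv, hφ u, hφ v, if_pos huA, if_neg hvA]
        group
      · exact Subgroup.mem_map.2 ⟨raagGen Γ u, hgu,
          by show φ _ = _; rw [hφ u, if_neg huA]⟩
  · by_cases hcap : ∃ t, t ∈ Θ ∧ t ∈ A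
    · -- Θ ⊆ A ∪ st(v) : conjugating by v fixes all generators of Θ
      obtain ⟨t, htΘ, htA⟩ := hcap
      have hsplit : ∀ u ∈ Θ, u ∈ A ∨ Γ.Adj v u := by
        intro u hu
        by_cases hus : u ∈ graphStar Γ v
        · rcases hus with heq | hadj
          · exact absurd (heq ▸ hu) hvΘ
          · exact Or.inr hadj
        · exact Or.inl (compIn_trans htA
            (hΘ v hvΘ t htΘ u hu (hAsub htA) hus))
      refine ⟨raagGen Γ v, ?_⟩
      have key : ∀ u ∈ Θ,
          ((MulAut.conj (raagGen Γ v) * φ : MulAut (RAAG Γ)) : RAAG Γ →* RAAG Γ)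
            (raagGen Γ u) = raagGen Γ u := by
        intro u hu
        have : ((MulAut.conj (raagGen Γ v) * φ : MulAut (RAAG Γ)) : RAAG Γ →* RAAG Γ)
            (raagGen Γ u) = raagGen Γ v * φ (raagGen Γ u) * (raagGen Γ v)⁻¹ := by
          simp [MulAut.conj_apply, MulAut.mul_apply]
        rw [this, hφ u]
        rcases hsplit u hu with huA | hadj
        · rw [if_pos huA]; group
        · have huA : u ∉ A := fun h => hAsub h (adj_mem_graphStar hadj)
          rw [if_neg huA, raagGen_commute hadj]
          group
      rw [specialSubgroup, MonoidHom.map_closure]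
      congr 1
      rw [← Set.image_comp]
      apply Set.image_congr
      intro u hu
      exact key u hu
    · -- Θ ∩ A = ∅ : φ fixes all generators of Θ
      push_neg at hcap
      refine ⟨1, ?_⟩
      have h1 : ((MulAut.conj (1 : RAAG Γ) * φ : MulAut (RAAG Γ)) : RAAG Γ →* RAAG Γ)
          = (φ : RAAG Γ →* RAAG Γ) := by ext a; simp
      rw [h1, specialSubgroup, MonoidHom.map_closure]
      congr 1
      rw [← Set.image_comp]
      apply Set.image_congr
      intro u hu
      show φ (raagGen Γ u) = raagGen Γ u
      rw [hφ u, if_neg (fun h => hcap u hu h)]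

lemma certified_mem_barC {Θ : Set V} (hΘ : Certified Γ Θ) (hne : Θ ≠ Set.univ) :
    Θ ∈ barC Γ := by
  refine ⟨hne, fun φ hφ => ?_⟩
  have hle : PAutRaag Γ ≤ preservingSubgroup Γ (specialSubgroup Γ Θ) := by
    rw [PAutRaag, Subgroup.closure_le]
    rintro ψ ⟨v, u, hu, hpc⟩
    exact partialConj_preserves hΘ hu hpc
  exact hle hφ

end GroupPart2
lemma pathN_one_adj {V : Type*} {Γ : SimpleGraph V} {s : Set V} {a b : V}
    (h : PathN Γ s 1 a b) : Γ.Adj a b := by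
  cases h with
  | cons ha hb hadj hp => rwa [hp.eq_of_zero] at hadj

lemma pathN_two_mid {V : Type*} {Γ : SimpleGraph V} {s : Set V} {a c : V}
    (h : PathN Γ s 2 a c) : ∃ b, b ∈ s ∧ Γ.Adj a b ∧ Γ.Adj b c := by
  cases h with
  | cons ha hb hadj hp => exact ⟨_, hb, hadj, pathN_one_adj hp⟩

theorem at_most_three_components_of_starCondition {V : Type*} [Fintype V]
    (Γ : SimpleGraph V) (hstar : StarCondition Γ) (Δ : Set V)
    (hpres : ∀ φ ∈ PAutRaag Γ, PreservesSubgroup Γ φ (specialSubgroup Γ Δ)) :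
    -- any four vertices of Δ contain two joined by a 𝒞̄_Δ-path,
    -- i.e. Δ has at most three 𝒞̄_Δ-connected components
    ∀ w : Fin 4 → V, (∀ i, w i ∈ Δ) →
      ∃ i j, i ≠ j ∧
        Relation.ReflTransGen (famAdj Γ Δ (barCDelta Γ Δ)) (w i) (w j) := by
  intro w hw
  by_contra hcon
  push_neg at hcon
  -- the four vertices are pairwise distinct
  have hdist : ∀ i j, i ≠ j → w i ≠ w j := fun i j hij heq =>
    hcon i j hij (heq ▸ Relation.ReflTransGen.refl)
  -- any certified proper set containing two of them and omitting a third yields a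
  -- one-step famAdj connection, contradiction
  have win : ∀ (Θ : Set V), Certified Γ Θ → ∀ i j m : Fin 4, i ≠ j →
      w i ∈ Θ → w j ∈ Θ → w m ∉ Θ → False := by
    intro Θ hc i j m hij hi hj hm
    have hne : Θ ≠ Set.univ := fun h => hm (h ▸ Set.mem_univ _)
    have hbar : Θ ∈ barC Γ := certified_mem_barC hc hne
    have hnsub : ¬ Δ ⊆ Θ := fun h => hm (h (hw m))
    exact hcon i j hij (Relation.ReflTransGen.single
      ⟨hw i, hw j, Or.inr ⟨Δ ∩ Θ, ⟨Θ, hbar, hnsub, rfl⟩, ⟨hw i, hi⟩, ⟨hw j, hj⟩⟩⟩)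
  -- the four vertices are pairwise non-adjacent
  have hnadj : ∀ i j, ¬ Γ.Adj (w i) (w j) := by
    intro i j hadj
    have hij : i ≠ j := by
      intro h; subst h; exact Γ.irrefl hadj
    exact hcon i j hij (Relation.ReflTransGen.single ⟨hw i, hw j, Or.inl hadj⟩)
  set K : Set V := ⋂ l, Γ.neighborSet (w l) with hK
  -- the w's are not in K
  have hWK : ∀ m, w m ∉ K := by
    intro m hm
    exact Γ.irrefl (Set.mem_iInter.1 hm m)
  -- every common neighbour of two distinct w's is adjacent to all of them
  have P1 : ∀ y (i j : Fin 4), i ≠ j → Γ.Adj (w i) y → Γ.Adj (w j) y → y ∈ K := by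
    intro y i j hij hiy hjy
    by_contra hyK
    rw [hK, Set.mem_iInter] at hyK
    push_neg at hyK
    obtain ⟨m, hm⟩ := hyK
    refine win (graphStar Γ y) (certified_graphStar y) i j m hij
      (adj_mem_graphStar hiy.symm) (adj_mem_graphStar hjy.symm) ?_
    refine not_mem_graphStar_iff.2 ⟨?_, fun h => hm h.symm⟩
    intro heq
    exact hnadj i m (heq ▸ hiy)
  -- no two of the w's lie in the same component of Γ ∖ K
  have P2 : ∀ i j, i ≠ j → w j ∉ compIn Γ Kᶜ (w i) := by
    intro i j hij hmem
    have hKlk : ∀ (l : Fin 4), ∀ k ∈ K, Γ.Adj k (w l) := by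
      intro l k hk
      exact (Set.mem_iInter.1 hk l).symm
    have hself : w i ∈ compIn Γ Kᶜ (w i) :=
      mem_compIn_iff.2 ⟨0, PathN.refl _ (hWK i)⟩
    -- all four w's lie in K ∪ compIn Γ Kᶜ (w i)
    have hall : ∀ m, w m ∈ compIn Γ Kᶜ (w i) := by
      intro m
      by_contra hm
      exact win (K ∪ compIn Γ Kᶜ (w i))
        (certified_union_comp K (w i) (hWK i) (hKlk i)) i j m hij
        (Or.inr hself) (Or.inr hmem)
        (fun h => h.elim (hWK m) hm)
    -- minimal distance between two distinct w's within Γ ∖ K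
    have hex : ∃ n, ∃ i' j' : Fin 4, i' ≠ j' ∧ PathN Γ Kᶜ n (w i') (w j') := by
      obtain ⟨n, hn⟩ := mem_compIn_iff.1 hmem
      exact ⟨n, i, j, hij, hn⟩
    classical
    obtain ⟨i₁, j₁, hne₁, hpath⟩ := Nat.find_spec hex
    set d := Nat.find hex with hd
    have hmin : ∀ p (i' j' : Fin 4), i' ≠ j' → PathN Γ Kᶜ p (w i') (w j') → d ≤ p :=
      fun p i' j' h hp => Nat.find_min' hex ⟨i', j', h, hp⟩
    have hd3 : 3 ≤ d := by
      have h0 : d ≠ 0 := by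
        intro h
        rw [h] at hpath
        exact hdist i₁ j₁ hne₁ hpath.eq_of_zero
      have h1 : d ≠ 1 := by
        intro h
        rw [h] at hpath
        exact hnadj i₁ j₁ (pathN_one_adj hpath)
      have h2 : d ≠ 2 := by
        intro h
        rw [h] at hpath
        obtain ⟨y, hy, hay, hyb⟩ := pathN_two_mid hpath
        exact hy (P1 y i₁ j₁ hne₁ hay hyb.symm)
      omega
    obtain ⟨m, hmi, hmj⟩ :=
      (by decide : ∀ i' j' : Fin 4, ∃ m, m ≠ i' ∧ m ≠ j') i₁ j₁
    refine win (K ∪ ell Γ K (w i₁) (w j₁) d)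
      (certified_ell K (w i₁) (w j₁) d hd3 (hKlk i₁) hpath) i₁ j₁ m hne₁
      (Or.inr ⟨0, d, PathN.refl _ hpath.mem_left, hpath, by omega⟩)
      (Or.inr ⟨d, 0, hpath, PathN.refl _ hpath.mem_right, by omega⟩) ?_
    rintro (hmK | ⟨p, q, hp, hq, hpq⟩)
    · exact hWK m hmK
    · have h₁ : d ≤ p := hmin p i₁ m (fun h => hmi h.symm) hp
      have h₂ : d ≤ q := hmin q m j₁ hmj hq
      omega
  exact hstar ⟨w, hdist, hnadj, P2⟩
end

section
/- Let Γ be a finite graph, Γ_0 the full subgraph of vertices not adjacent to every other vertex, and 𝔞 the right-angled Artin Lie algebra on Γ_0 over a field k of characteristic 0. For each partial conjugation c_L^w (w ∈ Γ_0, L a connected component of Γ ∖ st(w)), the map on generators of 𝔞 given by v ↦ [w,v] if v ∈ L and v ↦ 0 otherwise extends to a well-defined derivation ψ(c_L^w) of 𝔞. -/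
/-- The defining relators of the right-angled Artin Lie algebra of a graph. -/
def raagLieRels (k : Type*) [Field k] {W : Type*} (Λ : SimpleGraph W) :
    Set (FreeLieAlgebra k W) :=
  {z | ∃ u v : W, Λ.Adj u v ∧ z = ⁅FreeLieAlgebra.of k u, FreeLieAlgebra.of k v⁆}

/-- The right-angled Artin Lie algebra of a graph `Λ` over `k`: the quotient of the free
Lie algebra on the vertices by the ideal generated by the brackets of adjacent vertices. -/
abbrev RaagLie (k : Type*) [Field k] {W : Type*} (Λ : SimpleGraph W) : Type _ :=
  FreeLieAlgebra k W ⧸ LieSubmodule.lieSpan k (FreeLieAlgebra k W) (raagLieRels k Λ)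

/-- The generator of the right-angled Artin Lie algebra at a vertex. -/
noncomputable def raagLieGen (k : Type*) [Field k] {W : Type*} (Λ : SimpleGraph W) (w : W) : RaagLie k Λ :=
  LieSubmodule.Quotient.mk (FreeLieAlgebra.of k w)

/-- The set of vertices of `Γ` which are not adjacent to every other vertex. -/
def gammaZero {V : Type*} (Γ : SimpleGraph V) : Set V :=
  {v | ∃ u, u ≠ v ∧ ¬ Γ.Adj v u}

namespace PsiAux

variable {k : Type*} [CommRing k] {A : Type*} [LieRing A] [LieAlgebra k A]

/-- The semidirect-product bracket on `A × A` (square-zero extension of `A` by the adjoint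
module). -/
instance : Bracket (A × A) (A × A) :=
  ⟨fun x y => (⁅x.1, y.1⁆, ⁅x.1, y.2⁆ + ⁅x.2, y.1⁆)⟩

lemma sd_bracket (x y : A × A) :
    ⁅x, y⁆ = (⁅x.1, y.1⁆, ⁅x.1, y.2⁆ + ⁅x.2, y.1⁆) := rfl

instance : LieRing (A × A) :=
  { (inferInstance : AddCommGroup (A × A)),
    (inferInstance : Bracket (A × A) (A × A)) with
    add_lie := fun x y z => by
      refine Prod.ext ?_ ?_ <;> simp [sd_bracket, add_lie] <;> abel
    lie_add := fun x y z => by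
      refine Prod.ext ?_ ?_ <;> simp [sd_bracket, lie_add] <;> abel
    lie_self := fun x => by
      refine Prod.ext ?_ ?_
      · show ⁅x.1, x.1⁆ = (0 : A × A).1
        rw [lie_self]; rfl
      · show ⁅x.1, x.2⁆ + ⁅x.2, x.1⁆ = (0 : A × A).2
        rw [← lie_skew x.2 x.1, add_neg_cancel]; rfl
    leibniz_lie := fun x y z => by
      refine Prod.ext ?_ ?_ <;>
        simp only [sd_bracket, lie_add, add_lie, lie_lie, Prod.fst_add, Prod.snd_add] <;>
        abel }

instance : LieAlgebra k (A × A) :=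
  { (inferInstance : Module k (A × A)) with
    lie_smul := fun t x y => by
      refine Prod.ext ?_ ?_ <;> simp [sd_bracket, smul_add] }

/-- Projection onto the first factor as a Lie algebra morphism. -/
def sdFst (k A : Type*) [CommRing k] [LieRing A] [LieAlgebra k A] : (A × A) →ₗ⁅k⁆ A :=
  { LinearMap.fst k A A with map_lie' := rfl }

@[simp] lemma sdFst_apply (x : A × A) : sdFst k A x = x.1 := rfl

section Abstract

variable {Q : Type*} [LieRing Q]

theorem auxTT (gw ga gb : Q) (hab : ⁅ga, gb⁆ = 0) :
    ⁅ga, ⁅gw, gb⁆⁆ + ⁅⁅gw, ga⁆, gb⁆ = 0 := by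
  rw [leibniz_lie, hab, lie_zero, add_zero, ← add_lie, ← lie_skew ga gw,
    neg_add_cancel, zero_lie]

theorem auxTF (gw ga gb : Q) (hab : ⁅ga, gb⁆ = 0) (hwb : ⁅gw, gb⁆ = 0) :
    ⁅ga, (0 : Q)⁆ + ⁅⁅gw, ga⁆, gb⁆ = 0 := by
  have hj := leibniz_lie gw ga gb
  rw [hab, hwb, lie_zero, lie_zero, add_zero] at hj
  rw [lie_zero, zero_add]
  exact hj.symm

theorem auxFT (gw ga gb : Q) (hab : ⁅ga, gb⁆ = 0) (hwa : ⁅gw, ga⁆ = 0) :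
    ⁅ga, ⁅gw, gb⁆⁆ + ⁅(0 : Q), gb⁆ = 0 := by
  rw [zero_lie, add_zero, leibniz_lie, hab, lie_zero, add_zero, ← lie_skew ga gw, hwa,
    neg_zero, zero_lie]

theorem auxFF (ga gb : Q) : ⁅ga, (0 : Q)⁆ + ⁅(0 : Q), gb⁆ = 0 := by
  rw [zero_lie, lie_zero, add_zero]

theorem auxZZ (p q r s : Q) (h1 : r = 0) (h2 : s = 0) : ⁅p, s⁆ + ⁅q, r⁆ = 0 := by
  rw [h1, h2, lie_zero, lie_zero, add_zero]

theorem auxLeib (p q r s : Q) : ⁅p, q⁆ + ⁅s, r⁆ = ⁅p, q⁆ - ⁅r, s⁆ := by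
  rw [sub_eq_add_neg, ← lie_skew s r]

end Abstract

end PsiAux

open Classical in
theorem psi_derivation_exists (k : Type*) [Field k] [CharZero k]
    {V : Type*} [Fintype V] (Γ : SimpleGraph V)
    (w : V) (hw : w ∈ gammaZero Γ)
    (L : Set V) (hL : ∃ u ∈ (graphStar Γ w)ᶜ, L = compIn Γ (graphStar Γ w)ᶜ u) :
    ∃ D : LieDerivation k (RaagLie k (Γ.induce (gammaZero Γ)))
        (RaagLie k (Γ.induce (gammaZero Γ))),
      ∀ v : ↥(gammaZero Γ),
        D (raagLieGen k (Γ.induce (gammaZero Γ)) v) =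
          if (v : V) ∈ L then
            ⁅raagLieGen k (Γ.induce (gammaZero Γ)) ⟨w, hw⟩,
              raagLieGen k (Γ.induce (gammaZero Γ)) v⁆
          else 0 := by
  classical
  obtain ⟨u₀, hu₀, hLdef⟩ := hL
  set Λ : SimpleGraph ↥(gammaZero Γ) := Γ.induce (gammaZero Γ) with hΛ
  set A : Type _ := FreeLieAlgebra k ↥(gammaZero Γ) with hA
  set I : LieSubmodule k A A :=
    LieSubmodule.lieSpan k A (raagLieRels k Λ) with hI
  -- the quotient map as a morphism of Lie algebras
  let mkL : A →ₗ⁅k⁆ RaagLie k Λ :=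
    { toLinearMap := (LieSubmodule.Quotient.mk' I).toLinearMap
      map_lie' := rfl }
  set g : ↥(gammaZero Γ) → RaagLie k Λ := raagLieGen k Λ with hg
  set gw : RaagLie k Λ := g ⟨w, hw⟩ with hgw
  -- the generator map into the semidirect product
  let φ : ↥(gammaZero Γ) → RaagLie k Λ × RaagLie k Λ :=
    fun v => (g v, if (v : V) ∈ L then ⁅gw, g v⁆ else 0)
  let f : A →ₗ⁅k⁆ RaagLie k Λ × RaagLie k Λ := FreeLieAlgebra.lift k φ
  have hfof : ∀ v, f (FreeLieAlgebra.of k v) = φ v := fun v =>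
    FreeLieAlgebra.lift_of_apply φ v
  have hmk_of : ∀ v, mkL (FreeLieAlgebra.of k v) = g v := fun v => rfl
  have hfst : ∀ x, (f x).1 = mkL x := by
    have h : (PsiAux.sdFst k (RaagLie k Λ)).comp f = mkL := by
      apply FreeLieAlgebra.hom_ext
      intro v
      show (f (FreeLieAlgebra.of k v)).1 = mkL (FreeLieAlgebra.of k v)
      rw [hfof v, hmk_of v]
    intro x
    exact LieHom.congr_fun h x
  let dL : A →ₗ[k] RaagLie k Λ :=
    (LinearMap.snd k (RaagLie k Λ) (RaagLie k Λ)).comp f.toLinearMap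
  have hd_of : ∀ v, dL (FreeLieAlgebra.of k v) =
      (if (v : V) ∈ L then ⁅gw, g v⁆ else 0) := by
    intro v
    show (f (FreeLieAlgebra.of k v)).2 = _
    rw [hfof v]
  have hleib : ∀ x y : A, dL ⁅x, y⁆ = ⁅mkL x, dL y⁆ + ⁅dL x, mkL y⁆ := by
    intro x y
    have h2 : dL ⁅x, y⁆ = ⁅(f x).1, (f y).2⁆ + ⁅(f x).2, (f y).1⁆ := by
      show (f ⁅x, y⁆).2 = _
      rw [f.map_lie]
      rfl
    rw [h2, hfst x, hfst y]
    rfl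
  -- the relations hold in the quotient
  have hrel : ∀ a b : ↥(gammaZero Γ), Λ.Adj a b → (⁅g a, g b⁆ : RaagLie k Λ) = 0 := by
    intro a b hab
    have hmem : (⁅FreeLieAlgebra.of k a, FreeLieAlgebra.of k b⁆ : A) ∈ I :=
      LieSubmodule.subset_lieSpan ⟨a, b, hab, rfl⟩
    have heq : (⁅g a, g b⁆ : RaagLie k Λ) =
        LieSubmodule.Quotient.mk (N := I) ⁅FreeLieAlgebra.of k a, FreeLieAlgebra.of k b⁆ := rfl
    rw [heq, LieSubmodule.Quotient.mk_eq_zero']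
    exact hmem
  -- combinatorial facts about L
  have hLmem : ∀ x ∈ L, x ∈ (graphStar Γ w)ᶜ := by
    rw [hLdef]; rintro x ⟨-, hx, -⟩; exact hx
  have hcross : ∀ a b : V, a ∈ L → Γ.Adj a b → b ∉ L → Γ.Adj w b := by
    intro a b ha hab hb
    have ha' := hLmem a ha
    by_cases hbs : b ∈ graphStar Γ w
    · rcases hbs with rfl | hbn
      · exact absurd hab.symm (fun h => ha' (Set.mem_insert_iff.2 (Or.inr h)))
      · exact hbn
    · exfalso
      apply hb
      rw [hLdef] at ha ⊢
      obtain ⟨h₀, ha2, hreach⟩ := ha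
      refine ⟨h₀, hbs, hreach.trans (SimpleGraph.Adj.reachable ?_)⟩
      simpa using hab
  -- the derivation-to-be kills the relators
  have hdrel : ∀ a b : ↥(gammaZero Γ), Λ.Adj a b →
      dL ⁅FreeLieAlgebra.of k a, FreeLieAlgebra.of k b⁆ = 0 := by
    intro a b hab
    have habΓ : Γ.Adj (a : V) (b : V) := by simpa [hΛ] using hab
    have hab0 : (⁅g a, g b⁆ : RaagLie k Λ) = 0 := hrel a b hab
    rw [hleib, hd_of, hd_of, hmk_of, hmk_of]
    by_cases haL : (a : V) ∈ L <;> by_cases hbL : (b : V) ∈ L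
    · rw [if_pos haL, if_pos hbL]
      exact PsiAux.auxTT gw (g a) (g b) hab0
    · rw [if_pos haL, if_neg hbL]
      have hwb : Γ.Adj w (b : V) := hcross a b haL habΓ hbL
      have hwbΛ : Λ.Adj ⟨w, hw⟩ b := by simpa [hΛ] using hwb
      exact PsiAux.auxTF gw (g a) (g b) hab0 (hrel ⟨w, hw⟩ b hwbΛ)
    · rw [if_neg haL, if_pos hbL]
      have hwa : Γ.Adj w (a : V) := hcross b a hbL habΓ.symm haL
      have hwaΛ : Λ.Adj ⟨w, hw⟩ a := by simpa [hΛ] using hwa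
      exact PsiAux.auxFT gw (g a) (g b) hab0 (hrel ⟨w, hw⟩ a hwaΛ)
    · rw [if_neg haL, if_neg hbL]
      exact PsiAux.auxFF (g a) (g b)
  -- `dL` vanishes on the relator ideal
  have hvanish : ∀ x ∈ I, dL x = 0 := by
    let N : LieSubmodule k A A :=
      { carrier := {x | mkL x = 0 ∧ dL x = 0}
        add_mem' := by
          rintro a b ⟨h1, h2⟩ ⟨h3, h4⟩
          exact ⟨by simp [map_add, h1, h3], by simp [map_add, h2, h4]⟩
        zero_mem' := ⟨mkL.map_zero, dL.map_zero⟩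
        smul_mem' := by
          rintro t a ⟨h1, h2⟩
          exact ⟨by simp [map_smul, h1], by simp [map_smul, h2]⟩
        lie_mem := by
          rintro x m ⟨h1, h2⟩
          refine ⟨?_, ?_⟩
          · show mkL ⁅x, m⁆ = 0
            rw [mkL.map_lie, h1]
            exact lie_zero _
          · show dL ⁅x, m⁆ = 0
            rw [hleib]
            exact PsiAux.auxZZ (mkL x) (dL x) (mkL m) (dL m) h1 h2 }
    have hIN : I ≤ N := by
      rw [hI, LieSubmodule.lieSpan_le]
      rintro z ⟨a, b, hab, rfl⟩
      refine ⟨?_, hdrel a b hab⟩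
      show mkL _ = 0
      have hmem : (⁅FreeLieAlgebra.of k a, FreeLieAlgebra.of k b⁆ : A) ∈ I :=
        LieSubmodule.subset_lieSpan ⟨a, b, hab, rfl⟩
      exact (LieSubmodule.Quotient.mk_eq_zero' (N := I)).2 hmem
    exact fun x hx => (hIN hx).2
  -- descend to the quotient
  let Dlin : RaagLie k Λ →ₗ[k] RaagLie k Λ :=
    Submodule.liftQ I.toSubmodule dL
      (fun x hx => LinearMap.mem_ker.2 (hvanish x hx))
  have hDlin : ∀ x : A, Dlin (LieSubmodule.Quotient.mk (N := I) x) = dL x := fun x => rfl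
  have hmk_surj : Function.Surjective (LieSubmodule.Quotient.mk (N := I) : A → RaagLie k Λ) :=
    Submodule.Quotient.mk_surjective _
  let D : LieDerivation k (RaagLie k Λ) (RaagLie k Λ) :=
    { toLinearMap := Dlin
      leibniz' := by
        intro a b
        obtain ⟨x, rfl⟩ := hmk_surj a
        obtain ⟨y, rfl⟩ := hmk_surj b
        show dL ⁅x, y⁆ = ⁅(mkL x : RaagLie k Λ), dL y⁆ - ⁅mkL y, dL x⁆
        rw [hleib]
        exact PsiAux.auxLeib (mkL x) (dL y) (mkL y) (dL x)
    }
  refine ⟨D, ?_⟩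
  intro v
  show Dlin (raagLieGen k Λ v) = _
  have hgen : raagLieGen k Λ v =
      LieSubmodule.Quotient.mk (N := I) (FreeLieAlgebra.of k v) := rfl
  rw [hgen, hDlin, hd_of]
end

section
/- Let Γ be a finite graph and Γ_0 ⊆ Γ the full subgraph of vertices not adjacent to every other vertex of Γ. Then the right-angled Artin Lie algebra 𝔞 = gr(A_{Γ_0}) over a field of characteristic 0 has trivial center. -/
/-!
Let `M` be the trace monoid of `Λ` and `ι : 𝔞 → k[M]` the map sending each generator to its
letter. If `z` is central, `ι z` commutes with every letter. The trace monoid is left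
cancellative (a trace is determined by its projections to pairs of non-adjacent letters), and
since every vertex has a non-neighbour, no non-trivial trace `x` satisfies `y * wⁿ = wⁿ * x` for
suitable `w` and `n`; hence `ι z` is a scalar.

On the other hand `k[M]` acts on `𝔞 × k` so that a word sends `(0, 1)` to its right-normed
bracket. Then `ι z` sends `(0, 1)` to `(D z, 0)`, where `D` is the derivation of `𝔞` fixing the
generators, i.e. multiplication by `n` in degree `n`. A scalar `c` sends `(0, 1)` to `(0, c)`, so
`D z = 0`, and `z = 0` because the characteristic is zero.
-/

open MonoidAlgebra

theorem List.exists_eq_append_cons_notMem {α : Type*} {a : α} {l : List α} (h : a ∈ l) :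
    ∃ p s, l = p ++ a :: s ∧ a ∉ p := by
  induction l with
  | nil => simp at h
  | cons b t ih =>
    by_cases hb : b = a
    · exact ⟨[], t, by simp [hb], by simp⟩
    · obtain ⟨p, s, rfl, hp⟩ := ih ((List.mem_cons.1 h).resolve_left (Ne.symm hb))
      exact ⟨b :: p, s, rfl, by simp [hp, Ne.symm hb]⟩

theorem FreeMonoid.toList_of_pow {α : Type*} (a : α) (n : ℕ) :
    (FreeMonoid.of a ^ n).toList = List.replicate n a := by
  induction n with
  | zero => rfl
  | succ n ih => rw [pow_succ, toList_mul, ih, toList_of, List.replicate_succ']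

theorem MonoidAlgebra.exists_mul_eq_mul_of_commute_single {k G : Type*} [Semiring k] [Monoid G]
    [IsLeftCancelMul G] {f : MonoidAlgebra k G} {g x : G} (h : Commute (single g 1) f)
    (hx : x ∈ f.coeff.support) : ∃ y, y * g = g * x := by
  by_contra! hne
  have hleft : (single g 1 * f).coeff (g * x) = f.coeff x := by
    rw [coeff_single_mul_eq_mul_coeff x fun _ _ => mul_right_inj g, one_mul]
  rw [h.eq, coeff_mul_single_of_forall_mul_ne 1 f hne] at hleft
  exact Finsupp.mem_support_iff.1 hx hleft.symm

theorem List.filter_cons_ne_filter_append_cons {α : Type*} [DecidableEq α] {a c : α}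
    {p s t : List α} (hap : a ∉ p) (hc : c ∈ p) :
    (a :: t).filter (fun w => w = c ∨ w = a) ≠
      (p ++ a :: s).filter (fun w => w = c ∨ w = a) := by
  intro hfil
  obtain ⟨b, q, hbq⟩ := List.exists_cons_of_ne_nil <|
    List.ne_nil_of_mem (a := c) (l := p.filter (fun w => w = c ∨ w = a)) (by simp [hc])
  have hb : b ∈ p := (List.mem_filter.1 (hbq ▸ List.mem_cons_self)).1
  rw [List.filter_cons_of_pos (by simp), List.filter_append, hbq] at hfil
  exact hap ((List.cons_eq_cons.1 hfil).1 ▸ hb)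

namespace LieDerivation

variable {k L : Type*} [Field k] [LieRing L] [LieAlgebra k L]

theorem lie_mem_eigenspace (D : LieDerivation k L L) {a b : k} {x y : L}
    (hx : x ∈ Module.End.eigenspace (D : Module.End k L) a)
    (hy : y ∈ Module.End.eigenspace (D : Module.End k L) b) :
    ⁅x, y⁆ ∈ Module.End.eigenspace (D : Module.End k L) (a + b) := by
  rw [Module.End.mem_eigenspace_iff, coeFn_coe] at hx hy ⊢
  rw [apply_lie_eq_add, hx, hy, lie_smul, smul_lie, add_smul, add_comm]

/-- Brackets of eigenvectors are eigenvectors, so the eigenvectors for the eigenvalues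
`1, 2, 3, …` span `L`; in characteristic zero none of these is `0`. -/
theorem injective_of_apply_eq_self [CharZero k] {s : Set L}
    (hs : LieSubalgebra.lieSpan k L s = ⊤) (D : LieDerivation k L L) (hD : ∀ x ∈ s, D x = x) :
    Function.Injective D := by
  set E : Module.End k L := (D : L →ₗ[k] L)
  set P : Submodule k L := ⨆ n : ℕ, Module.End.eigenspace E (n + 1)
  have hlie : Submodule.map₂ (LieModule.toEnd k L L : L →ₗ[k] Module.End k L) P P ≤ P := by
    rw [Submodule.map₂_iSup_left]
    refine iSup_le fun n => ?_
    rw [Submodule.map₂_iSup_right]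
    refine iSup_le fun m => Submodule.map₂_le.2 fun x hx y hy => ?_
    refine Submodule.mem_iSup_of_mem (n + m + 1) ?_
    have hxy := D.lie_mem_eigenspace hx hy
    rwa [show (n : k) + 1 + (m + 1) = ((n + m + 1 : ℕ) : k) + 1 by push_cast; ring] at hxy
  have hP : P = ⊤ := by
    let K : LieSubalgebra k L :=
      { P with lie_mem' := fun hx hy => hlie (Submodule.apply_mem_map₂ _ hx hy) }
    have hsK : LieSubalgebra.lieSpan k L s ≤ K := LieSubalgebra.lieSpan_le.2 fun x hx =>
      Submodule.mem_iSup_of_mem 0 (by simp [E, hD x hx])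
    rw [hs] at hsK
    exact eq_top_iff.2 fun x _ => hsK (LieSubalgebra.mem_top x)
  refine (injective_iff_map_eq_zero D).2 fun z hz => ?_
  have hz0 : z ∈ Module.End.eigenspace E 0 := by simp [E, hz]
  have hzP : z ∈ P := hP ▸ Submodule.mem_top
  have hzpos : z ∈ ⨆ μ ∈ ({0}ᶜ : Set k), Module.End.eigenspace E μ :=
    iSup_le (fun n => le_biSup (Module.End.eigenspace E) (Nat.cast_add_one_ne_zero n)) hzP
  exact Submodule.disjoint_def.1 ((Module.End.eigenspaces_iSupIndep E).disjoint_biSup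
    (y := ({0}ᶜ : Set k)) (by simp)) z hz0 hzpos

end LieDerivation

section

variable {W : Type*} (Λ : SimpleGraph W)

def traceRel : FreeMonoid W → FreeMonoid W → Prop :=
  fun a b => ∃ s t, Λ.Adj s t ∧ a = .of s * .of t ∧ b = .of t * .of s

/-- Over a field `k`, the monoid algebra of the trace monoid is the universal enveloping algebra
of `RaagLie k Λ`. -/
abbrev TraceMonoid : Type _ := PresentedMonoid (traceRel Λ)

namespace TraceMonoid

variable {Λ}

def of (w : W) : TraceMonoid Λ := PresentedMonoid.of _ w

def ofList (l : List W) : TraceMonoid Λ := PresentedMonoid.mk _ (FreeMonoid.ofList l)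

theorem ofList_surjective : Function.Surjective (ofList (Λ := Λ)) := fun x =>
  let ⟨a, ha⟩ := PresentedMonoid.surjective_mk x
  ⟨a.toList, by rw [ofList, FreeMonoid.ofList_toList, ha]⟩

@[simp] theorem ofList_nil : ofList [] = (1 : TraceMonoid Λ) := map_one _

@[simp] theorem ofList_cons (a : W) (l : List W) :
    ofList (a :: l) = (of a * ofList l : TraceMonoid Λ) := by
  rw [ofList, FreeMonoid.ofList_cons, map_mul]; rfl

theorem of_mul_of_comm {s t : W} (h : Λ.Adj s t) : of s * of t = (of t * of s : TraceMonoid Λ) :=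
  PresentedMonoid.mk_eq_mk_of_rel ⟨s, t, h, rfl, rfl⟩

theorem ofList_append_cons {p s : List W} {a : W} (hp : ∀ c ∈ p, Λ.Adj c a) :
    ofList (p ++ a :: s) = (of a * ofList (p ++ s) : TraceMonoid Λ) := by
  induction p with
  | nil => simp
  | cons c p ih =>
    simp only [List.forall_mem_cons] at hp
    simp only [List.cons_append, ofList_cons, ih hp.2, ← mul_assoc, of_mul_of_comm hp.1]

section Projection

variable [DecidableEq W]

def proj (u v : W) (h : ¬ Λ.Adj u v) : TraceMonoid Λ →* FreeMonoid W :=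
  PresentedMonoid.lift (fun w => if w = u ∨ w = v then .of w else 1) <| by
    rintro _ _ ⟨s, t, hst, rfl, rfl⟩
    have : ¬ ((s = u ∨ s = v) ∧ (t = u ∨ t = v)) := by
      rintro ⟨rfl | rfl, rfl | rfl⟩
      exacts [hst.ne rfl, h hst, h hst.symm, hst.ne rfl]
    simp only [map_mul, FreeMonoid.lift_eval_of]
    rcases not_and_or.1 this with hs | ht <;> simp [*]

theorem toList_proj_ofList (u v : W) (h : ¬ Λ.Adj u v) (l : List W) :
    (proj u v h (ofList l)).toList = l.filter (fun w => w = u ∨ w = v) := by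
  induction l with
  | nil => simp
  | cons a l ih =>
    rw [ofList_cons, map_mul, FreeMonoid.toList_mul, ih, List.filter_cons]
    simp only [proj, of, PresentedMonoid.lift_of]
    split_ifs <;> simp_all

theorem proj_of_right (u w : W) (h : ¬ Λ.Adj u w) :
    proj u w h (of w) = FreeMonoid.of w := by
  simp [proj, of]

/-- By induction on `l`: every letter of `l'` before the first occurrence of the head `a` of `l`
commutes with `a`, since otherwise the projections of `l` and `l'` to that letter and `a` would
start differently. -/
theorem ofList_eq_ofList_of_filter_eq {l l' : List W}
    (h : ∀ u v, ¬ Λ.Adj u v →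
      l.filter (fun w => w = u ∨ w = v) = l'.filter (fun w => w = u ∨ w = v)) :
    (ofList l : TraceMonoid Λ) = ofList l' := by
  induction l generalizing l' with
  | nil =>
    cases l' with
    | nil => rfl
    | cons a _ => simpa using h a a Λ.irrefl
  | cons a t ih =>
    have ha : a ∈ l' := by
      have hmem : a ∈ (a :: t).filter (fun w => w = a ∨ w = a) := by simp
      rw [h a a Λ.irrefl] at hmem
      exact (List.mem_filter.1 hmem).1
    obtain ⟨p, s, rfl, hap⟩ := List.exists_eq_append_cons_notMem ha
    have hadj : ∀ c ∈ p, Λ.Adj c a := fun c hc => by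
      by_contra hca
      exact List.filter_cons_ne_filter_append_cons hap hc (h c a hca)
    rw [ofList_cons, ofList_append_cons hadj]
    congr 1
    refine ih fun u v huv => ?_
    have hfil := h u v huv
    by_cases hau : a = u ∨ a = v
    · have hp : p.filter (fun w => w = u ∨ w = v) = [] := by
        refine List.filter_eq_nil_iff.2 fun c hc hcu => ?_
        have hca := hadj c hc
        rcases of_decide_eq_true hcu with rfl | rfl <;> rcases hau with rfl | rfl
        exacts [hca.ne rfl, huv hca, huv hca.symm, hca.ne rfl]
      have hau' : decide (a = u ∨ a = v) = true := decide_eq_true hau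
      simp only [List.filter_cons, hau', ↓reduceIte, List.filter_append, hp,
        List.nil_append] at hfil ⊢
      exact List.cons_injective hfil
    · simpa [List.filter_cons, List.filter_append, hau] using hfil

theorem ext_proj {x y : TraceMonoid Λ}
    (h : ∀ u v (huv : ¬ Λ.Adj u v), proj u v huv x = proj u v huv y) : x = y := by
  obtain ⟨l, rfl⟩ := ofList_surjective x
  obtain ⟨l', rfl⟩ := ofList_surjective y
  refine ofList_eq_ofList_of_filter_eq fun u v huv => ?_
  rw [← toList_proj_ofList _ _ huv, ← toList_proj_ofList _ _ huv, h u v huv]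

end Projection

instance : IsLeftCancelMul (TraceMonoid Λ) where
  mul_left_cancel a x y hxy := by
    classical
    refine ext_proj fun u v huv => mul_left_cancel (a := proj u v huv a) ?_
    rw [← map_mul, ← map_mul]
    exact congrArg _ hxy

/-- Pick a letter `u` of `x` and a non-neighbour `w` of `u`. Projected to `{u, w}`, an equation
`y * w ^ n = w ^ n * x` with `n` the length of the projection of `x` forces that projection to be
`w ^ n`, which does not contain `u`. -/
theorem exists_forall_mul_pow_ne (hΛ : ∀ u, ∃ w ≠ u, ¬ Λ.Adj u w) {x : TraceMonoid Λ}
    (hx : x ≠ 1) : ∃ w n, ∀ y : TraceMonoid Λ, y * of w ^ n ≠ of w ^ n * x := by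
  classical
  obtain ⟨l, rfl⟩ := ofList_surjective x
  obtain ⟨u, hu⟩ := List.exists_mem_of_ne_nil l (by rintro rfl; exact hx ofList_nil)
  obtain ⟨w, hwu, huw⟩ := hΛ u
  set P := proj u w huw
  refine ⟨w, (P (ofList l)).toList.length, fun y hy => hwu ?_⟩
  have hu' : u ∈ (P (ofList l)).toList := by simp [P, toList_proj_ofList, hu]
  have hP := congrArg (fun z => (P z).toList) hy
  simp only [map_mul, map_pow, P, proj_of_right, FreeMonoid.toList_mul,
    FreeMonoid.toList_of_pow] at hP
  have hlen := congrArg List.length hP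
  simp only [List.length_append, List.length_replicate] at hlen
  rw [← (List.append_inj hP (by simp; omega)).2] at hu'
  exact (List.eq_of_mem_replicate hu').symm

theorem eq_single_one_of_forall_commute {k : Type*} [Semiring k]
    (hΛ : ∀ u, ∃ w ≠ u, ¬ Λ.Adj u w) {f : MonoidAlgebra k (TraceMonoid Λ)}
    (hf : ∀ w, Commute (single (of w) 1) f) : f = single 1 (f.coeff 1) := by
  refine MonoidAlgebra.ext (Finsupp.support_subset_singleton.1 fun x hx => ?_)
  by_contra hx1
  obtain ⟨w, n, hwn⟩ := exists_forall_mul_pow_ne hΛ (Finset.notMem_singleton.1 hx1)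
  have hcomm : Commute (single (of w ^ n) 1) f := by
    simpa [single_pow] using (hf w).pow_left n
  obtain ⟨y, hy⟩ := exists_mul_eq_mul_of_commute_single hcomm hx
  exact hwn y hy

end TraceMonoid

end

namespace RaagLie

attribute [local instance] LieRing.ofAssociativeRing

variable {k : Type*} [Field k] {W : Type*} {Λ : SimpleGraph W}

variable (k Λ) in
noncomputable def mk : FreeLieAlgebra k W →ₗ⁅k⁆ RaagLie k Λ :=
  { LieSubmodule.Quotient.mk' _ with map_lie' := LieSubmodule.Quotient.mk_bracket _ _ _ }

theorem mk_surjective : Function.Surjective (mk k Λ) :=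
  LieSubmodule.Quotient.surjective_mk' _

@[simp] theorem mk_of (w : W) : mk k Λ (FreeLieAlgebra.of k w) = raagLieGen k Λ w := rfl

theorem lie_gen_eq_zero_of_adj {u v : W} (h : Λ.Adj u v) :
    ⁅raagLieGen k Λ u, raagLieGen k Λ v⁆ = 0 := by
  rw [← mk_of, ← mk_of, ← LieHom.map_lie]
  exact (LieSubmodule.Quotient.mk_eq_zero _).2 (LieSubmodule.subset_lieSpan ⟨u, v, h, rfl⟩)

variable {A : Type*} [LieRing A] [LieAlgebra k A]

noncomputable def lift (f : W → A) (hf : ∀ u v, Λ.Adj u v → ⁅f u, f v⁆ = 0) :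
    RaagLie k Λ →ₗ⁅k⁆ A :=
  have hker : LieSubmodule.lieSpan k _ (raagLieRels k Λ) ≤ (FreeLieAlgebra.lift k f).ker := by
    rw [LieSubmodule.lieSpan_le]
    rintro _ ⟨u, v, huv, rfl⟩
    simp [hf u v huv]
  { toLinearMap := Submodule.liftQ _ (FreeLieAlgebra.lift k f : _ →ₗ[k] A)
      fun _ hx => LinearMap.mem_ker.2 (LieHom.mem_ker.1 (hker hx))
    map_lie' := by
      intro x y
      obtain ⟨x, rfl⟩ := mk_surjective x
      obtain ⟨y, rfl⟩ := mk_surjective y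
      rw [← LieHom.map_lie]
      exact (FreeLieAlgebra.lift k f).map_lie x y }

@[simp] theorem lift_gen (f : W → A) (hf : ∀ u v, Λ.Adj u v → ⁅f u, f v⁆ = 0) (w : W) :
    lift f hf (raagLieGen k Λ w) = f w :=
  FreeLieAlgebra.lift_of_apply f w

@[ext] theorem hom_ext {g₁ g₂ : RaagLie k Λ →ₗ⁅k⁆ A}
    (h : ∀ w, g₁ (raagLieGen k Λ w) = g₂ (raagLieGen k Λ w)) : g₁ = g₂ := by
  have hmk : g₁.comp (mk k Λ) = g₂.comp (mk k Λ) := FreeLieAlgebra.hom_ext h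
  ext z
  obtain ⟨x, rfl⟩ := mk_surjective z
  exact LieHom.congr_fun hmk x

theorem lieSpan_range_gen :
    LieSubalgebra.lieSpan k (RaagLie k Λ) (Set.range (raagLieGen k Λ)) = ⊤ := by
  set K := LieSubalgebra.lieSpan k (RaagLie k Λ) (Set.range (raagLieGen k Λ))
  let toK : RaagLie k Λ →ₗ⁅k⁆ K :=
    lift (fun w => ⟨raagLieGen k Λ w, LieSubalgebra.subset_lieSpan (Set.mem_range_self w)⟩)
      fun u v huv => Subtype.ext (lie_gen_eq_zero_of_adj huv)
  have hid : K.incl.comp toK = LieHom.id := by ext; simp [toK]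
  refine eq_top_iff.2 fun z _ => ?_
  have hz : (toK z : RaagLie k Λ) = z := LieHom.congr_fun hid z
  exact hz ▸ (toK z).2

variable (k Λ) in
noncomputable def toMonoidAlgebra : RaagLie k Λ →ₗ⁅k⁆ MonoidAlgebra k (TraceMonoid Λ) :=
  lift (fun w => single (TraceMonoid.of w) 1) fun u v huv => by
    rw [Ring.lie_def, single_mul_single, single_mul_single, TraceMonoid.of_mul_of_comm huv,
      sub_self]

@[simp] theorem toMonoidAlgebra_gen (w : W) :
    toMonoidAlgebra k Λ (raagLieGen k Λ w) = single (TraceMonoid.of w) 1 :=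
  lift_gen _ _ w

section Dynkin

variable {L : Type*} [LieRing L] [LieAlgebra k L]

variable (k) in
/-- The product `dynkinOp k x₁ * ⋯ * dynkinOp k xₙ` sends `(0, 1)` to the right-normed bracket
`⁅x₁, ⁅x₂, ⋯ xₙ⁆⁆`; the second coordinate only records the empty product. -/
noncomputable def dynkinOp (x : L) : Module.End k (L × k) :=
  LinearMap.inl k L k ∘ₗ (LieAlgebra.ad k L x ∘ₗ LinearMap.fst k L k +
    (LinearMap.snd k L k).smulRight x)

@[simp] theorem dynkinOp_apply (x : L) (p : L × k) :
    dynkinOp k x p = (⁅x, p.1⁆ + p.2 • x, 0) :=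
  rfl

theorem commute_dynkinOp {x y : L} (h : ⁅x, y⁆ = 0) :
    Commute (dynkinOp k x) (dynkinOp k y) := by
  refine LinearMap.ext fun p => Prod.ext ?_ rfl
  simp [leibniz_lie x y, h, ← lie_skew y x]

variable (f : W → L) (hf : ∀ u v, Λ.Adj u v → ⁅f u, f v⁆ = 0)

noncomputable def dynkinRep : MonoidAlgebra k (TraceMonoid Λ) →ₐ[k] Module.End k (L × k) :=
  MonoidAlgebra.lift k _ _ <| PresentedMonoid.lift (dynkinOp k ∘ f) <| by
    rintro _ _ ⟨s, t, hst, rfl, rfl⟩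
    simpa using (commute_dynkinOp (hf s t hst)).eq

theorem dynkinRep_single_one (c : k) :
    dynkinRep f hf (single 1 c) = c • 1 := by
  rw [dynkinRep, MonoidAlgebra.lift_single, map_one]

theorem exists_dynkinRep_toMonoidAlgebra (z : RaagLie k Λ) : ∃ d, ∀ p : L × k,
      dynkinRep f hf (toMonoidAlgebra k Λ z) p = (⁅lift f hf z, p.1⁆ + p.2 • d, 0) := by
  have hz : z ∈ LieSubalgebra.lieSpan k _ (Set.range (raagLieGen k Λ)) :=
    lieSpan_range_gen (k := k) (Λ := Λ) ▸ LieSubalgebra.mem_top z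
  induction hz using LieSubalgebra.lieSpan_induction with
  | mem _ hx =>
    obtain ⟨w, rfl⟩ := hx
    exact ⟨f w, by simp [dynkinRep, TraceMonoid.of]⟩
  | zero => exact ⟨0, by simp [Prod.ext_iff]⟩
  | add x y _ _ hx hy =>
    obtain ⟨dx, hx⟩ := hx
    obtain ⟨dy, hy⟩ := hy
    exact ⟨dx + dy, fun p => by simp [hx, hy, smul_add, add_lie]; abel⟩
  | smul c x _ hx =>
    obtain ⟨dx, hx⟩ := hx
    exact ⟨c • dx, fun p => by simp [hx, smul_add, smul_comm c]⟩
  | lie x y _ _ hx hy =>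
    obtain ⟨dx, hx⟩ := hx
    obtain ⟨dy, hy⟩ := hy
    refine ⟨⁅lift f hf x, dy⁆ - ⁅lift f hf y, dx⁆, fun p => ?_⟩
    simp [Ring.lie_def, hx, hy, lie_lie, smul_sub]
    abel

end Dynkin

theorem lift_gen_apply (z : RaagLie k Λ) :
    lift (raagLieGen k Λ) (fun _ _ => lie_gen_eq_zero_of_adj) z = z :=
  LieHom.congr_fun (show lift (raagLieGen k Λ) _ = LieHom.id from hom_ext fun w => by simp) z

variable (k Λ)

local notation "Ψ" =>
  dynkinRep (L := RaagLie k Λ) (raagLieGen k Λ) (fun _ _ => lie_gen_eq_zero_of_adj)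

/-- The Dynkin derivation, which multiplies elements of degree `n` by `n`. -/
noncomputable def dynkin : LieDerivation k (RaagLie k Λ) (RaagLie k Λ) where
  toLinearMap := LinearMap.fst k _ k ∘ₗ LinearMap.applyₗ ((0, 1) : RaagLie k Λ × k) ∘ₗ
    (Ψ).toLinearMap ∘ₗ
      (toMonoidAlgebra k Λ : RaagLie k Λ →ₗ[k] MonoidAlgebra k (TraceMonoid Λ))
  leibniz' x y := by
    obtain ⟨dx, hx⟩ :=
      exists_dynkinRep_toMonoidAlgebra (raagLieGen k Λ) (fun _ _ => lie_gen_eq_zero_of_adj) x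
    obtain ⟨dy, hy⟩ :=
      exists_dynkinRep_toMonoidAlgebra (raagLieGen k Λ) (fun _ _ => lie_gen_eq_zero_of_adj) y
    simp [Ring.lie_def, hx, hy, lift_gen_apply]

theorem dynkinRep_toMonoidAlgebra_zero_one (z : RaagLie k Λ) :
    Ψ (toMonoidAlgebra k Λ z) (0, 1) = (dynkin k Λ z, 0) := by
  obtain ⟨d, hd⟩ :=
    exists_dynkinRep_toMonoidAlgebra (raagLieGen k Λ) (fun _ _ => lie_gen_eq_zero_of_adj) z
  simp [dynkin, hd]

theorem dynkin_gen (w : W) : dynkin k Λ (raagLieGen k Λ w) = raagLieGen k Λ w := by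
  simp [dynkin, dynkinRep, TraceMonoid.of]

theorem center_eq_bot [CharZero k] (hΛ : ∀ u, ∃ w ≠ u, ¬ Λ.Adj u w) :
    LieAlgebra.center k (RaagLie k Λ) = ⊥ := by
  refine (LieSubmodule.eq_bot_iff _).2 fun z hz => ?_
  have hcomm (w : W) : Commute (single (TraceMonoid.of w) 1) (toMonoidAlgebra k Λ z) := by
    have h := congrArg (toMonoidAlgebra k Λ)
      ((LieModule.mem_maxTrivSubmodule k _ _ z).1 hz (raagLieGen k Λ w))
    rwa [LieHom.map_lie, map_zero, toMonoidAlgebra_gen, Ring.lie_def, sub_eq_zero] at h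
  have hD : dynkin k Λ z = 0 := by
    have h := dynkinRep_toMonoidAlgebra_zero_one k Λ z
    rw [TraceMonoid.eq_single_one_of_forall_commute hΛ hcomm, dynkinRep_single_one] at h
    simpa using (congrArg Prod.fst h).symm
  refine LieDerivation.injective_of_apply_eq_self (lieSpan_range_gen (k := k) (Λ := Λ))
    (dynkin k Λ) ?_ (hD.trans (map_zero _).symm)
  rintro _ ⟨w, rfl⟩
  exact dynkin_gen k Λ w

end RaagLie

theorem raagLie_center_trivial_general (k : Type*) [Field k] [CharZero k]
    {V : Type*} (Γ : SimpleGraph V) :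
    LieAlgebra.center k (RaagLie k (Γ.induce (gammaZero Γ))) = ⊥ :=
  RaagLie.center_eq_bot k _ fun ⟨a, u, hua, hau⟩ =>
    ⟨⟨u, a, hua.symm, fun h => hau h.symm⟩, fun h => hua (congrArg Subtype.val h), hau⟩

theorem raagLie_center_trivial (k : Type*) [Field k] [CharZero k]
    {V : Type*} [Fintype V] (Γ : SimpleGraph V) :
    LieAlgebra.center k (RaagLie k (Γ.induce (gammaZero Γ))) = ⊥ :=
  raagLie_center_trivial_general k Γ
end
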